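/- A multiset of cycles σ_1, …, σ_m in S_n can be ordered so that their product equals the n-cycle (1 2 … n) only if all of the cycles are increasing (each cycle, written starting with its smallest element, has strictly increasing entries). -/

import Mathlib

/-- A permutation is an increasing cycle if it is the cyclic permutation
`(s_1 s_2 … s_k)` for a strictly increasing list `s_1 < s_2 < … < s_k`. -/
def IsIncreasingCycle {n : ℕ} (σ : Equiv.Perm (Fin n)) : Prop :=
  ∃ s : List (Fin n), s.Pairwise (· < ·) ∧ σ = s.formPerm

/-!
Let `c = (1 2 … n)` and let `σ` be one of the factors. Then `σ⁻¹ c` is a product of conjugates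
of the other factors, hence of at most `n - |supp σ|` transpositions; since a transposition
changes the number of orbits by at most one, `σ⁻¹ c` has at least `|supp σ|` orbits.
On the other hand, starting from any point, `σ⁻¹ c` follows `c` until it first lands in
`supp σ`, so every orbit of `σ⁻¹ c` meets `supp σ`, and therefore meets it exactly once.
If `y` is the first point of `supp σ` after `x ∈ supp σ` along `c`, the orbit of `x` reaches
`σ⁻¹ y ∈ supp σ`, so `σ⁻¹ y = x`: `σ` sends each point of its support to the next one in
cyclic order, i.e. `σ` is the increasing cycle on its support.
-/

open Finset

namespace Equiv.Perm

variable {α : Type*}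

noncomputable def numOrbits (π : Perm α) : ℕ := Nat.card (Quotient (SameCycle.setoid π))

theorem SameCycle.eq_of_invariant [Finite α] {π : Perm α} {β : Type*} {φ : α → β}
    (hφ : ∀ x, φ (π x) = φ x) {x y : α} (h : π.SameCycle x y) : φ x = φ y := by
  obtain ⟨i, rfl⟩ := h.exists_nat_pow_eq
  rw [coe_pow]
  exact (congrFun (Function.iterate_invariant (funext hφ) i) x).symm

theorem numOrbits_one : numOrbits (1 : Perm α) = Nat.card α :=
  (Nat.card_eq_of_bijective (Quotient.mk (SameCycle.setoid 1))
    ⟨fun _ _ h => sameCycle_one.mp (Quotient.exact h), Quotient.mk_surjective⟩).symm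

theorem numOrbits_le_numOrbits_swap_mul_add_one [Finite α] [DecidableEq α] (π : Perm α)
    (a b : α) : numOrbits π ≤ numOrbits (swap a b * π) + 1 := by
  classical
  let mk : α → Quotient (SameCycle.setoid π) := Quotient.mk _
  -- Merging the orbit of `b` into that of `a` yields an invariant of `swap a b * π`.
  let φ : α → Quotient (SameCycle.setoid π) := fun x => if π.SameCycle x b then mk a else mk x
  have hφπ : ∀ x, φ (π x) = φ x := fun x => by
    by_cases hx : π.SameCycle x b
    · simp [φ, hx]
    · simpa [φ, hx] using Quotient.sound (SameCycle.refl π x).apply_left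
  have hφb : φ b = φ a := by
    simp only [φ, if_pos (SameCycle.refl π b)]
    split_ifs <;> rfl
  have hφ : ∀ x, φ ((swap a b * π) x) = φ x := fun x => by
    rw [← hφπ x, mul_apply, swap_apply_def]
    split_ifs with ha hb
    · rw [ha, hφb]
    · rw [hb, hφb]
    · rfl
  let F : Option (Quotient (SameCycle.setoid (swap a b * π))) → Quotient (SameCycle.setoid π) :=
    fun o => o.elim (mk b) (Quotient.lift φ fun _ _ h => h.eq_of_invariant hφ)
  have hF : Function.Surjective F := by
    rintro ⟨x⟩
    by_cases hx : π.SameCycle x b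
    · exact ⟨none, Quotient.sound hx.symm⟩
    · exact ⟨some (Quotient.mk _ x), show φ x = mk x from if_neg hx⟩
  calc numOrbits π ≤ Nat.card (Option (Quotient (SameCycle.setoid (swap a b * π)))) :=
        Nat.card_le_card_of_surjective F hF
    _ = numOrbits (swap a b * π) + 1 := Finite.card_option

theorem numOrbits_le_numOrbits_mul_add [Fintype α] [DecidableEq α] (τ ρ : Perm α) :
    numOrbits ρ ≤ numOrbits (τ * ρ) + (#τ.support - 1) := by
  induction hk : #τ.support using Nat.strong_induction_on generalizing τ with
  | _ k ih =>
  rcases eq_or_ne τ 1 with rfl | hτ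
  · simp
  obtain ⟨x, hx⟩ : ∃ x, τ x ≠ x := not_forall.mp fun h => hτ (ext h)
  have hlt := card_support_swap_mul hx
  have h₁ := ih _ (hk ▸ hlt) (swap x (τ x) * τ) rfl
  have h₂ : numOrbits (swap x (τ x) * τ * ρ) ≤ numOrbits (τ * ρ) + 1 := by
    simpa only [mul_assoc, swap_mul_self_mul] using
      numOrbits_le_numOrbits_swap_mul_add_one (swap x (τ x) * τ * ρ) x (τ x)
  have := one_lt_card_support_of_ne_one hτ
  omega

theorem card_le_numOrbits_prod_add_sum [Fintype α] [DecidableEq α] (l : List (Perm α)) :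
    Nat.card α ≤ numOrbits l.prod + (l.map fun τ => #τ.support - 1).sum := by
  induction l with
  | nil => simp [numOrbits_one]
  | cons τ l ih =>
    have := numOrbits_le_numOrbits_mul_add τ l.prod
    simp only [List.prod_cons, List.map_cons, List.sum_cons]
    omega

theorem card_le_numOrbits_inv_mul_prod [Fintype α] [DecidableEq α] (l₁ l₂ : List (Perm α))
    (σ : Perm α) :
    Nat.card α ≤ numOrbits (σ⁻¹ * (l₁ ++ σ :: l₂).prod) +
      (l₁.map fun τ => #τ.support - 1).sum + (l₂.map fun τ => #τ.support - 1).sum := by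
  have hprod : (l₁.map (fun τ => σ⁻¹ * τ * σ) ++ l₂).prod = σ⁻¹ * (l₁ ++ σ :: l₂).prod := by
    induction l₁ with
    | nil => simp
    | cons τ l ih =>
      rw [List.map_cons, List.cons_append, List.prod_cons, ih]
      simp [mul_assoc]
  have hsum : (l₁.map (fun τ => σ⁻¹ * τ * σ)).map (fun τ => #τ.support - 1) =
      l₁.map fun τ => #τ.support - 1 := by
    simpa using fun τ _ => congrArg (· - 1) (by simpa using card_support_conj (σ := σ⁻¹) (τ := τ))
  simpa [hprod, hsum, add_assoc] using
    card_le_numOrbits_prod_add_sum (l₁.map (fun τ => σ⁻¹ * τ * σ) ++ l₂)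

theorem eq_of_sameCycle_of_forall_exists_mem {τ : Perm α} {S : Finset α}
    (hS : ∀ y, ∃ x ∈ S, τ.SameCycle y x) (hcard : #S ≤ numOrbits τ) {x y : α} (hx : x ∈ S)
    (hy : y ∈ S) (hxy : τ.SameCycle x y) : x = y := by
  let q : S → Quotient (SameCycle.setoid τ) := fun z => Quotient.mk _ z
  have hq : Function.Surjective q := by
    rintro ⟨y⟩
    obtain ⟨x, hx, hyx⟩ := hS y
    exact ⟨⟨x, hx⟩, Quotient.sound hyx.symm⟩
  have hinj := (hq.bijective_of_nat_card_le (by simpa [numOrbits] using hcard)).injective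
  exact congrArg Subtype.val (@hinj ⟨x, hx⟩ ⟨y, hy⟩ (Quotient.sound hxy))

section FirstReturn

variable [Fintype α] [DecidableEq α] {c σ : Perm α}

theorem inv_apply_mem_support {x : α} : σ⁻¹ x ∈ σ.support ↔ x ∈ σ.support := by
  simpa only [support_inv] using apply_mem_support (f := σ⁻¹) (x := x)

theorem inv_mul_pow_succ_apply (x : α) (d : ℕ)
    (hgap : ∀ j, 0 < j → j ≤ d → (c ^ j) x ∉ σ.support) :
    ((σ⁻¹ * c) ^ (d + 1)) x = σ⁻¹ ((c ^ (d + 1)) x) := by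
  induction d with
  | zero => simp
  | succ d ih =>
    have hfix : σ⁻¹ ((c ^ (d + 1)) x) = (c ^ (d + 1)) x := by
      rw [inv_eq_iff_eq, eq_comm, ← notMem_support]
      exact hgap (d + 1) d.succ_pos le_rfl
    rw [pow_succ', mul_apply, ih fun j hj hjd => hgap j hj (by omega), hfix,
      pow_succ' c (d + 1), mul_apply, mul_apply]

theorem exists_mem_support_sameCycle_inv_mul (hc : ∀ x y, c.SameCycle x y) (hσ : σ ≠ 1)
    (y : α) : ∃ x ∈ σ.support, (σ⁻¹ * c).SameCycle y x := by
  obtain ⟨s, hs⟩ := nonempty_iff_ne_empty.mpr (mt support_eq_empty_iff.mp hσ)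
  obtain ⟨j, hj⟩ := (hc y s).exists_nat_pow_eq
  have hhit : ∃ j, (c ^ j) y ∈ σ.support := ⟨j, hj ▸ hs⟩
  have hfirst := Nat.find_spec hhit
  rcases hd : Nat.find hhit with _ | d <;> rw [hd] at hfirst
  · exact ⟨y, hfirst, SameCycle.refl _ _⟩
  · refine ⟨σ⁻¹ ((c ^ (d + 1)) y), inv_apply_mem_support.mpr hfirst, ((d + 1 : ℕ) : ℤ), ?_⟩
    rw [zpow_natCast]
    exact inv_mul_pow_succ_apply y d fun j hj hjd => Nat.find_min hhit (by omega)

/-- On its support, `σ` is the first-return map of `c`. -/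
theorem apply_eq_pow_apply_of_forall_pow_apply_notMem (hc : ∀ x y, c.SameCycle x y)
    (hσ : #σ.support ≤ numOrbits (σ⁻¹ * c)) {x : α} (hx : x ∈ σ.support) {d : ℕ} (hd : 0 < d)
    (hxd : (c ^ d) x ∈ σ.support) (hgap : ∀ j, 0 < j → j < d → (c ^ j) x ∉ σ.support) :
    σ x = (c ^ d) x := by
  obtain ⟨d, rfl⟩ : ∃ d', d = d' + 1 := ⟨d - 1, by omega⟩
  have hσ1 : σ ≠ 1 := fun h => by simp [h] at hx
  have hreturn : (σ⁻¹ * c).SameCycle x (σ⁻¹ ((c ^ (d + 1)) x)) :=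
    ⟨((d + 1 : ℕ) : ℤ), by
      rw [zpow_natCast]; exact inv_mul_pow_succ_apply x d fun j hj hjd => hgap j hj (by omega)⟩
  rw [← eq_inv_iff_eq]
  exact eq_of_sameCycle_of_forall_exists_mem (exists_mem_support_sameCycle_inv_mul hc hσ1) hσ hx
    (inv_apply_mem_support.mpr hxd) hreturn

end FirstReturn

theorem eq_of_forall_ne_apply_eq {σ π : Perm α} (a : α) (h : ∀ x, x ≠ a → σ x = π x) :
    σ = π := by
  ext x
  rcases eq_or_ne x a with rfl | hx
  · by_contra hne
    have hpre : σ⁻¹ (π x) ≠ x := fun h' => hne (inv_eq_iff_eq.mp h').symm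
    exact hpre (π.injective ((h _ hpre).symm.trans (by simp)))
  · exact h x hx

end Equiv.Perm

theorem List.SortedLT.getElem_succ_le_of_getElem_lt {β : Type*} [LinearOrder β] {l : List β}
    (hl : l.SortedLT) {i : ℕ} (hi : i + 1 < l.length) {z : β} (hz : z ∈ l)
    (hlt : l[i] < z) : l[i + 1] ≤ z := by
  obtain ⟨j, hj, rfl⟩ := List.mem_iff_getElem.mp hz
  rw [hl.getElem_lt_getElem_iff] at hlt
  rw [hl.getElem_le_getElem_iff]
  omega

open Equiv Perm

theorem val_finRotate_pow_apply {n : ℕ} (x : Fin n) {j : ℕ} (h : x.val + j < n) :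
    ((finRotate n ^ j) x).val = x.val + j := by
  obtain ⟨m, rfl⟩ : ∃ m, n = m + 1 := ⟨n - 1, by omega⟩
  induction j with
  | zero => simp
  | succ j ih =>
    have hj := ih (by omega)
    rw [pow_succ', mul_apply, coe_finRotate_of_ne_last, hj, add_assoc]
    exact Fin.ne_of_val_ne (by rw [hj, Fin.val_last]; omega)

theorem sameCycle_finRotate {n : ℕ} (x y : Fin n) : (finRotate n).SameCycle x y := by
  wlog hxy : x ≤ y generalizing x y
  · exact (this y x (le_of_not_ge hxy)).symm
  refine ⟨((y.val - x.val : ℕ) : ℤ), ?_⟩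
  rw [zpow_natCast]
  ext
  rw [Fin.le_iff_val_le_val] at hxy
  rw [val_finRotate_pow_apply] <;> omega

theorem apply_eq_of_forall_mem_support_lt {n : ℕ} {σ : Perm (Fin n)}
    (hσ : #σ.support ≤ numOrbits (σ⁻¹ * finRotate n)) {x y : Fin n} (hx : x ∈ σ.support)
    (hy : y ∈ σ.support) (hxy : x < y) (hnext : ∀ z ∈ σ.support, x < z → y ≤ z) : σ x = y := by
  rw [Fin.lt_def] at hxy
  have hval : ∀ j, j ≤ y.val - x.val → ((finRotate n ^ j) x).val = x.val + j :=
    fun j hj => val_finRotate_pow_apply x (by omega)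
  have hpow : (finRotate n ^ (y.val - x.val)) x = y := Fin.ext (by rw [hval _ le_rfl]; omega)
  rw [← hpow]
  refine apply_eq_pow_apply_of_forall_pow_apply_notMem sameCycle_finRotate hσ hx (by omega)
    (by rwa [hpow]) fun j hj hjd hmem => ?_
  have := hnext _ hmem (Fin.lt_def.mpr (by rw [hval j hjd.le]; omega))
  rw [Fin.le_iff_val_le_val, hval j hjd.le] at this
  omega

theorem isIncreasingCycle_of_card_support_le_numOrbits {n : ℕ} {σ : Perm (Fin n)}
    (hσ : #σ.support ≤ numOrbits (σ⁻¹ * finRotate n)) : IsIncreasingCycle σ := by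
  rcases eq_or_ne σ 1 with rfl | hσ1
  · exact ⟨[], List.Pairwise.nil, List.formPerm_nil.symm⟩
  set l := σ.support.sort
  have hl : l.SortedLT := σ.support.sortedLT_sort
  have hmem : ∀ z, z ∈ l ↔ z ∈ σ.support := fun z => Finset.mem_sort _
  have hlen : 0 < l.length := by
    simpa [l, Finset.length_sort, Finset.card_pos, Finset.nonempty_iff_ne_empty] using hσ1
  refine ⟨l, hl.pairwise, eq_of_forall_ne_apply_eq l[l.length - 1] fun x hx => ?_⟩
  by_cases hxσ : x ∈ σ.support
  · obtain ⟨i, hi, rfl⟩ := List.mem_iff_getElem.mp ((hmem x).mpr hxσ)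
    have hi1 : i + 1 < l.length := by
      by_contra h
      obtain rfl : i = l.length - 1 := by omega
      exact hx rfl
    rw [List.formPerm_apply_getElem _ hl.nodup]
    simp only [Nat.mod_eq_of_lt hi1]
    exact apply_eq_of_forall_mem_support_lt hσ hxσ ((hmem _).mp (List.getElem_mem _))
      (hl.getElem_lt_getElem_iff.mpr i.lt_succ_self)
      fun z hz => hl.getElem_succ_le_of_getElem_lt hi1 ((hmem z).mpr hz)
  · rw [notMem_support.mp hxσ, List.formPerm_apply_of_notMem (mt (hmem x).mp hxσ)]

theorem orderable_implies_increasing_general (n : ℕ)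
    (s : Multiset (Equiv.Perm (Fin n)))
    (hmin : (s.map fun σ => σ.support.card - 1).sum = n - 1)
    (hord : ∃ l : List (Equiv.Perm (Fin n)),
      (l : Multiset (Equiv.Perm (Fin n))) = s ∧ l.prod = finRotate n) :
    ∀ σ ∈ s, IsIncreasingCycle σ := by
  obtain ⟨l, rfl, hprod⟩ := hord
  intro σ hσ
  obtain ⟨l₁, l₂, rfl⟩ := List.append_of_mem (Multiset.mem_coe.mp hσ)
  apply isIncreasingCycle_of_card_support_le_numOrbits
  have hcount := card_le_numOrbits_inv_mul_prod l₁ l₂ σ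
  rw [hprod, Nat.card_fin] at hcount
  simp only [Multiset.map_coe, Multiset.sum_coe, List.map_append, List.map_cons, List.sum_append,
    List.sum_cons] at hmin
  have := σ.support.card_le_univ
  rw [Fintype.card_fin] at this
  omega

/-- a multiset of cycles (each of length ≥ 2, minimal in the
sense `∑ (|σ_i| − 1) = n − 1`) can be ordered so that the product equals the
`n`-cycle `(1 2 … n)` (realized as `finRotate n`) only if every cycle in it is
increasing. -/
theorem orderable_implies_increasing (n : ℕ)
    (s : Multiset (Equiv.Perm (Fin n)))
    (hcyc : ∀ σ ∈ s, σ.IsCycle ∧ 2 ≤ σ.support.card)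
    (hmin : (s.map fun σ => σ.support.card - 1).sum = n - 1)
    (hord : ∃ l : List (Equiv.Perm (Fin n)),
      (l : Multiset (Equiv.Perm (Fin n))) = s ∧ l.prod = finRotate n) :
    ∀ σ ∈ s, IsIncreasingCycle σ :=
  orderable_implies_increasing_general n s hmin hord
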